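/- arXiv:1603.09474 — 5 statements merged into one kernel-verified Lean document; each statement's English description precedes it below -/
import Mathlib

section
/- Let x ∈ X, α > 0 and h ∈ H. If p₁ ∈ H is a global minimum point of g_{α,x} and p₂ ∈ H is a global minimum point of g_{α,x+jh}, then ‖p₂ − p₁‖_H ≤ ‖h‖_H. In other words, the map sending h ∈ H to the minimizer of g_{α,x+jh} is Lipschitz continuous from H to H with Lipschitz constant at most 1. -/
/-!
Test the minimality of `p₁` at the midpoint `m` of `p₁` and `h + p₂`, and that of `p₂` at
`m - h`. Under `x + j ·` and `x + j h + j ·` respectively, both test points land on the midpoint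
of the two optimal points of `X`, so convexity of `f` cancels `f` and leaves
`‖p₁‖² + ‖p₂‖² ≤ ‖m‖² + ‖m - h‖²`. Since `m + (m - h) = p₁ + p₂` and `m - (m - h) = h`, the
parallelogram law turns this into `‖p₁ - p₂‖² ≤ ‖h‖²`.
-/

open Set

theorem ConvexOn.map_midpoint_le {E : Type*} [AddCommGroup E] [Module ℝ E] {φ : E → ℝ}
    (hφ : ConvexOn ℝ univ φ) (a b : E) : φ (midpoint ℝ a b) ≤ (φ a + φ b) / 2 := by
  have := hφ.2 (mem_univ a) (mem_univ b) (by norm_num : (0 : ℝ) ≤ 2⁻¹)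
    (by norm_num : (0 : ℝ) ≤ 2⁻¹) (by norm_num)
  rw [midpoint_eq_smul_add, smul_add]
  simpa [add_div, inv_mul_eq_div] using this

theorem add_le_add_midpoint_of_forall_le_shift {E : Type*} [AddCommGroup E] [Module ℝ E]
    {φ q : E → ℝ} (hφ : ConvexOn ℝ univ φ) {h p₁ p₂ : E}
    (hp₁ : ∀ k, φ p₁ + q p₁ ≤ φ k + q k) (hp₂ : ∀ k, φ (h + p₂) + q p₂ ≤ φ (h + k) + q k) :
    q p₁ + q p₂ ≤ q (midpoint ℝ p₁ (h + p₂)) + q (midpoint ℝ p₁ (h + p₂) - h) := by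
  set m := midpoint ℝ p₁ (h + p₂)
  have h₁ := hp₁ m
  have h₂ := hp₂ (m - h)
  rw [add_sub_cancel] at h₂
  linarith [hφ.map_midpoint_le p₁ (h + p₂)]

theorem norm_sub_le_of_forall_le_shift {H : Type*} [NormedAddCommGroup H]
    [InnerProductSpace ℝ H] {φ : H → ℝ} (hφ : ConvexOn ℝ univ φ) {α : ℝ} (hα : 0 < α)
    {h p₁ p₂ : H} (hp₁ : ∀ k, φ p₁ + ‖p₁‖ ^ 2 / (2 * α) ≤ φ k + ‖k‖ ^ 2 / (2 * α))
    (hp₂ : ∀ k, φ (h + p₂) + ‖p₂‖ ^ 2 / (2 * α) ≤ φ (h + k) + ‖k‖ ^ 2 / (2 * α)) :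
    ‖p₂ - p₁‖ ≤ ‖h‖ := by
  set m := midpoint ℝ p₁ (h + p₂)
  have hq := add_le_add_midpoint_of_forall_le_shift (q := fun k ↦ ‖k‖ ^ 2 / (2 * α)) hφ hp₁ hp₂
  rw [← add_div, ← add_div, div_le_div_iff_of_pos_right (by positivity)] at hq
  have hsum : m + (m - h) = p₁ + p₂ := by
    rw [← add_sub_assoc, midpoint_add_self]
    abel
  have hp := parallelogram_law_with_norm ℝ p₁ p₂
  have hm := parallelogram_law_with_norm ℝ m (m - h)
  rw [hsum, sub_sub_cancel] at hm
  rw [norm_sub_rev, ← pow_le_pow_iff_left₀ (norm_nonneg _) (norm_nonneg _) two_ne_zero]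
  linarith

theorem minimizer_lipschitz_general {X H : Type*} [NormedAddCommGroup X]
    [NormedSpace ℝ X] [NormedAddCommGroup H]
    [InnerProductSpace ℝ H]
    (j : H →L[ℝ] X)
    (f : X → ℝ) (hconv : ConvexOn ℝ Set.univ f)
    (x : X) (α : ℝ) (hα : 0 < α) (h p₁ p₂ : H)
    (hp₁ : ∀ k : H, f (x + j p₁) + ‖p₁‖ ^ 2 / (2 * α) ≤ f (x + j k) + ‖k‖ ^ 2 / (2 * α))
    (hp₂ : ∀ k : H, f (x + j h + j p₂) + ‖p₂‖ ^ 2 / (2 * α) ≤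
      f (x + j h + j k) + ‖k‖ ^ 2 / (2 * α)) :
    ‖p₂ - p₁‖ ≤ ‖h‖ := by
  have hφ : ConvexOn ℝ univ (fun k ↦ f (x + j k)) := by
    have := (hconv.translate_right x).comp_linearMap (j : H →ₗ[ℝ] X)
    rwa [preimage_univ, preimage_univ] at this
  refine norm_sub_le_of_forall_le_shift hφ hα hp₁ fun k ↦ ?_
  simpa only [map_add, add_assoc] using hp₂ k

/-- The map sending `h` to the minimizer of `g_{α,x+jh}` is `1`-Lipschitz:
if `p₁` minimizes `g_{α,x}` and `p₂` minimizes `g_{α,x+jh}`, then `‖p₂ - p₁‖ ≤ ‖h‖`. -/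
theorem minimizer_lipschitz {X H : Type*} [NormedAddCommGroup X]
    [NormedSpace ℝ X] [CompleteSpace X] [NormedAddCommGroup H]
    [InnerProductSpace ℝ H] [CompleteSpace H]
    (j : H →L[ℝ] X) (hj : Function.Injective j)
    (f : X → ℝ) (hconv : ConvexOn ℝ Set.univ f) (hlsc : LowerSemicontinuous f)
    (x : X) (α : ℝ) (hα : 0 < α) (h p₁ p₂ : H)
    (hp₁ : ∀ k : H, f (x + j p₁) + ‖p₁‖ ^ 2 / (2 * α) ≤ f (x + j k) + ‖k‖ ^ 2 / (2 * α))
    (hp₂ : ∀ k : H, f (x + j h + j p₂) + ‖p₂‖ ^ 2 / (2 * α) ≤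
      f (x + j h + j k) + ‖k‖ ^ 2 / (2 * α)) :
    ‖p₂ - p₁‖ ≤ ‖h‖ :=
  minimizer_lipschitz_general j f hconv x α hα h p₁ p₂ hp₁ hp₂
end

section
/- Let x ∈ X, α > 0, and let p ∈ H be the global minimum point of g_{α,x}. Then the function Φ : H → ℝ defined by Φ(h) = f_α(x + j h) is Fréchet differentiable at 0, with derivative the continuous linear functional h ↦ −(1/α)⟨p, h⟩_H. (That is, f_α is differentiable along H at every point x, with ∇_H f_α(x) = −(1/α) p.) -/
/-!
The objective `g k = f (x + j k) + ‖k‖² / (2α)` is `(1/α)`-strongly convex, so its minimiser `p`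
satisfies the quadratic growth bound `g p + ‖k - p‖² / (2α) ≤ g k`. Evaluating it at `h + k` and
expanding the squares gives `f_α(x + j h) ≥ f_α(x) - ⟪p, h⟫ / α`, while testing the infimum at
`k = p - h` gives `f_α(x + j h) ≤ f_α(x) - ⟪p, h⟫ / α + ‖h‖² / (2α)`. The first-order error is
therefore `O(‖h‖²)`.
-/

open Set Filter Topology

theorem StrongConvexOn.add_sq_norm_sub_le_of_isMinOn {E : Type*} [NormedAddCommGroup E]
    [NormedSpace ℝ E] {s : Set E} {m : ℝ} {g : E → ℝ} (hg : StrongConvexOn s m g) {p k : E}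
    (hp : IsMinOn g s p) (hps : p ∈ s) (hks : k ∈ s) :
    g p + m / 2 * ‖k - p‖ ^ 2 ≤ g k := by
  -- compare `g p` with `g` at `(1 - t) • p + t • k`, divide by `t` and let `t → 0⁺`
  have key : ∀ t ∈ Ioc (0 : ℝ) 1, g p + (1 - t) * (m / 2 * ‖k - p‖ ^ 2) ≤ g k := by
    rintro t ⟨ht0, ht1⟩
    have hmin : g p ≤ g ((1 - t) • p + t • k) :=
      hp (hg.1 hps hks (sub_nonneg.2 ht1) ht0.le (sub_add_cancel 1 t))
    have hconv := hg.2 hps hks (sub_nonneg.2 ht1) ht0.le (sub_add_cancel 1 t)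
    rw [smul_eq_mul, smul_eq_mul, norm_sub_rev] at hconv
    nlinarith
  have hlim : Tendsto (fun t : ℝ => g p + (1 - t) * (m / 2 * ‖k - p‖ ^ 2)) (𝓝[>] 0)
      (𝓝 (g p + m / 2 * ‖k - p‖ ^ 2)) :=
    tendsto_nhdsWithin_of_tendsto_nhds ((Continuous.tendsto' (by fun_prop) _ _ (by simp)))
  exact le_of_tendsto hlim (eventually_of_mem (Ioc_mem_nhdsGT one_pos) key)

theorem ConvexOn.strongConvexOn_add_sq_norm_div {E : Type*} [NormedAddCommGroup E]
    [InnerProductSpace ℝ E] {s : Set E} {g : E → ℝ} (hg : ConvexOn ℝ s g) (α : ℝ) :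
    StrongConvexOn s (1 / α) (fun k => g k + ‖k‖ ^ 2 / (2 * α)) := by
  rw [strongConvexOn_iff_convex]
  convert hg using 2 with k
  ring

theorem hasFDerivAt_of_norm_sub_le_mul_sq_norm {𝕜 E F : Type*} [NontriviallyNormedField 𝕜]
    [NormedAddCommGroup E] [NormedSpace 𝕜 E] [NormedAddCommGroup F] [NormedSpace 𝕜 F]
    {φ : E → F} {L : E →L[𝕜] F} {x₀ : E} (C : ℝ)
    (hφ : ∀ h, ‖φ (x₀ + h) - φ x₀ - L h‖ ≤ C * ‖h‖ ^ 2) : HasFDerivAt φ L x₀ := by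
  rw [hasFDerivAt_iff_isLittleO_nhds_zero]
  refine (Asymptotics.IsBigO.of_bound C (Eventually.of_forall fun h => ?_)).trans_isLittleO
    (Asymptotics.isLittleO_norm_pow_id one_lt_two)
  simpa using hφ h

section MoreauEnvelope

variable {H : Type*} [NormedAddCommGroup H] [InnerProductSpace ℝ H]

noncomputable def moreauEnvelope (ψ : H → ℝ) (α : ℝ) (h : H) : ℝ :=
  ⨅ k, ψ (h + k) + ‖k‖ ^ 2 / (2 * α)

variable {ψ : H → ℝ} {α : ℝ} {p : H}

theorem sub_inner_div_le_add_sq_norm_div (hψ : ConvexOn ℝ univ ψ) (hα : 0 < α)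
    (hp : ∀ k, ψ p + ‖p‖ ^ 2 / (2 * α) ≤ ψ k + ‖k‖ ^ 2 / (2 * α)) (h k : H) :
    ψ p + ‖p‖ ^ 2 / (2 * α) - inner ℝ p h / α ≤ ψ (h + k) + ‖k‖ ^ 2 / (2 * α) := by
  have growth := (hψ.strongConvexOn_add_sq_norm_div α).add_sq_norm_sub_le_of_isMinOn
    (fun k _ => hp k) (mem_univ p) (mem_univ (h + k))
  have hk : 0 ≤ ‖k - p‖ ^ 2 / (2 * α) := by positivity
  have key : ψ (h + k) + ‖k‖ ^ 2 / (2 * α) - (ψ p + ‖p‖ ^ 2 / (2 * α) - inner ℝ p h / α)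
      = (ψ (h + k) + ‖h + k‖ ^ 2 / (2 * α))
        - (ψ p + ‖p‖ ^ 2 / (2 * α) + 1 / α / 2 * ‖h + k - p‖ ^ 2) + ‖k - p‖ ^ 2 / (2 * α) := by
    rw [norm_sub_sq_real, norm_sub_sq_real, norm_add_sq_real, inner_add_left, real_inner_comm h]
    field_simp
    ring
  linarith

theorem bddBelow_range_add_sq_norm_div (hψ : ConvexOn ℝ univ ψ) (hα : 0 < α)
    (hp : ∀ k, ψ p + ‖p‖ ^ 2 / (2 * α) ≤ ψ k + ‖k‖ ^ 2 / (2 * α)) (h : H) :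
    BddBelow (range fun k => ψ (h + k) + ‖k‖ ^ 2 / (2 * α)) :=
  ⟨_, forall_mem_range.2 (sub_inner_div_le_add_sq_norm_div hψ hα hp h)⟩

theorem sub_inner_div_le_moreauEnvelope (hψ : ConvexOn ℝ univ ψ) (hα : 0 < α)
    (hp : ∀ k, ψ p + ‖p‖ ^ 2 / (2 * α) ≤ ψ k + ‖k‖ ^ 2 / (2 * α)) (h : H) :
    ψ p + ‖p‖ ^ 2 / (2 * α) - inner ℝ p h / α ≤ moreauEnvelope ψ α h :=
  le_ciInf (sub_inner_div_le_add_sq_norm_div hψ hα hp h)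

theorem moreauEnvelope_le_sub_inner_div_add (hψ : ConvexOn ℝ univ ψ) (hα : 0 < α)
    (hp : ∀ k, ψ p + ‖p‖ ^ 2 / (2 * α) ≤ ψ k + ‖k‖ ^ 2 / (2 * α)) (h : H) :
    moreauEnvelope ψ α h ≤ ψ p + ‖p‖ ^ 2 / (2 * α) - inner ℝ p h / α + ‖h‖ ^ 2 / (2 * α) := by
  refine (ciInf_le (bddBelow_range_add_sq_norm_div hψ hα hp h) (p - h)).trans_eq ?_
  rw [add_sub_cancel, norm_sub_sq_real]
  field_simp
  ring

theorem ConvexOn.hasFDerivAt_moreauEnvelope_zero (hψ : ConvexOn ℝ univ ψ) (hα : 0 < α)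
    (hp : ∀ k, ψ p + ‖p‖ ^ 2 / (2 * α) ≤ ψ k + ‖k‖ ^ 2 / (2 * α)) :
    HasFDerivAt (moreauEnvelope ψ α) ((-(1 / α)) • innerSL ℝ p) 0 := by
  have lower := sub_inner_div_le_moreauEnvelope hψ hα hp
  have upper := moreauEnvelope_le_sub_inner_div_add hψ hα hp
  have at_zero : moreauEnvelope ψ α 0 = ψ p + ‖p‖ ^ 2 / (2 * α) :=
    le_antisymm (by simpa using upper 0) (by simpa using lower 0)
  refine hasFDerivAt_of_norm_sub_le_mul_sq_norm (1 / (2 * α)) fun h => ?_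
  rw [zero_add, at_zero, Real.norm_eq_abs, abs_le]
  simp only [FunLike.coe_smul, Pi.smul_apply, innerSL_apply_apply, smul_eq_mul]
  have e₁ : 1 / (2 * α) * ‖h‖ ^ 2 = ‖h‖ ^ 2 / (2 * α) := by ring
  have e₂ : -(1 / α) * inner ℝ p h = -(inner ℝ p h / α) := by ring
  have : 0 ≤ ‖h‖ ^ 2 / (2 * α) := by positivity
  constructor <;> linarith [lower h, upper h]

end MoreauEnvelope

theorem moreauYosida_hasFDerivAt_general {X H : Type*} [NormedAddCommGroup X]
    [NormedSpace ℝ X] [NormedAddCommGroup H]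
    [InnerProductSpace ℝ H]
    (j : H →L[ℝ] X)
    (f : X → ℝ) (hconv : ConvexOn ℝ Set.univ f)
    (x : X) (α : ℝ) (hα : 0 < α) (p : H)
    (hp : ∀ h : H, f (x + j p) + ‖p‖ ^ 2 / (2 * α) ≤ f (x + j h) + ‖h‖ ^ 2 / (2 * α)) :
    HasFDerivAt
      (fun h : H => ⨅ k : H, (f (x + j h + j k) + ‖k‖ ^ 2 / (2 * α)))
      ((-(1 / α)) • innerSL ℝ p) (0 : H) := by
  have hψ : ConvexOn ℝ univ fun k => f (x + j k) := by
    simpa [Function.comp_def] using (hconv.translate_right x).comp_linearMap j.toLinearMap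
  convert hψ.hasFDerivAt_moreauEnvelope_zero hα hp using 2 with h
  simp only [moreauEnvelope, map_add, add_assoc]

/-- Differentiability along `H` of the Moreau–Yosida approximation: if `p` is the
global minimum point of `g_{α,x}`, then `h ↦ f_α(x + j h)` is Fréchet differentiable
at `0` with derivative `h ↦ -(1/α)⟨p, h⟩`, i.e. `∇_H f_α(x) = -(1/α) p`. -/
theorem moreauYosida_hasFDerivAt {X H : Type*} [NormedAddCommGroup X]
    [NormedSpace ℝ X] [CompleteSpace X] [NormedAddCommGroup H]
    [InnerProductSpace ℝ H] [CompleteSpace H]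
    (j : H →L[ℝ] X) (hj : Function.Injective j)
    (f : X → ℝ) (hconv : ConvexOn ℝ Set.univ f) (hlsc : LowerSemicontinuous f)
    (x : X) (α : ℝ) (hα : 0 < α) (p : H)
    (hp : ∀ h : H, f (x + j p) + ‖p‖ ^ 2 / (2 * α) ≤ f (x + j h) + ‖h‖ ^ 2 / (2 * α)) :
    HasFDerivAt
      (fun h : H => ⨅ k : H, (f (x + j h + j k) + ‖k‖ ^ 2 / (2 * α)))
      ((-(1 / α)) • innerSL ℝ p) (0 : H) :=
  moreauYosida_hasFDerivAt_general j f hconv x α hα p hp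
end

section
/- Let x ∈ X and, for each α ∈ (0,1), let P(x,α) ∈ H denote the global minimum point of g_{α,x}. Then ‖P(x,α)‖_H → 0 as α → 0⁺. -/
/-!
By Hahn–Banach, the convex lower semicontinuous `f` lies above a continuous affine function
`ψ + c`. Comparing `g_{α,x}(P(x,α))` with `g_{α,x}(0) = f x` then gives
`‖P‖² / (2α) ≤ (f x - c - ψ x) + ‖ψ ∘ j‖ ‖P‖`, so `‖P(x,α)‖² = O(α)`.
-/

open Filter Set Topology

theorem ConvexOn.exists_continuousLinearMap_add_const_le {E : Type*} [AddCommGroup E]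
    [Module ℝ E] [TopologicalSpace E] [IsTopologicalAddGroup E] [ContinuousSMul ℝ E]
    [LocallyConvexSpace ℝ E] {f : E → ℝ} (hf : ConvexOn ℝ univ f)
    (hfc : LowerSemicontinuous f) :
    ∃ (ψ : E →L[ℝ] ℝ) (c : ℝ), ∀ y, ψ y + c ≤ f y := by
  obtain ⟨ψ, c, hle, -⟩ := hf.exists_affine_le_of_lt (𝕜 := ℝ) (mem_univ 0)
    (sub_one_lt (f 0)) isClosed_univ (hfc.lowerSemicontinuousOn univ)
  exact ⟨ψ, c, fun y => by simpa using hle ⟨y, mem_univ y⟩⟩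

theorem norm_sq_le_of_add_norm_sq_div_le {E : Type*} [SeminormedAddCommGroup E]
    [NormedSpace ℝ E] {g : E → ℝ} {ψ : E →L[ℝ] ℝ} {c α : ℝ} (hg : ∀ h, ψ h + c ≤ g h)
    (hα : 0 < α) {p : E} (hp : g p + ‖p‖ ^ 2 / (2 * α) ≤ g 0) :
    ‖p‖ ^ 2 ≤ 4 * α * (g 0 - c + α * ‖ψ‖ ^ 2) := by
  have hψp : -(‖ψ‖ * ‖p‖) ≤ ψ p := neg_le_of_abs_le (by simpa using ψ.le_opNorm p)
  have hquad : ‖p‖ ^ 2 ≤ 2 * α * (g 0 - c + ‖ψ‖ * ‖p‖) := by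
    rw [← div_le_iff₀' (by positivity)]
    linarith [hg p]
  -- `2α‖ψ‖‖p‖ ≤ ‖p‖² / 2 + 2α²‖ψ‖²` absorbs the linear term.
  nlinarith [sq_nonneg (‖p‖ - 2 * α * ‖ψ‖)]

theorem tendsto_norm_zero_of_norm_sq_le {ι E : Type*} [SeminormedAddCommGroup E]
    {l : Filter ι} {u : ι → E} {v : ι → ℝ} (hv : Tendsto v l (𝓝 0))
    (huv : ∀ᶠ i in l, ‖u i‖ ^ 2 ≤ v i) :
    Tendsto (fun i => ‖u i‖) l (𝓝 0) :=
  squeeze_zero' (.of_forall fun _ => norm_nonneg _)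
    (huv.mono fun i hi => by simpa using Real.abs_le_sqrt hi) (by simpa using hv.sqrt)

theorem minimizer_norm_tendsto_zero_general {X H : Type*} [NormedAddCommGroup X]
    [NormedSpace ℝ X] [NormedAddCommGroup H]
    [InnerProductSpace ℝ H]
    (j : H →L[ℝ] X)
    (f : X → ℝ) (hconv : ConvexOn ℝ Set.univ f) (hlsc : LowerSemicontinuous f)
    (x : X) (P : ℝ → H)
    (hP : ∀ α ∈ Set.Ioo (0 : ℝ) 1, ∀ h : H,
      f (x + j (P α)) + ‖P α‖ ^ 2 / (2 * α) ≤ f (x + j h) + ‖h‖ ^ 2 / (2 * α)) :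
    Filter.Tendsto (fun α : ℝ => ‖P α‖) (nhdsWithin 0 (Set.Ioi 0)) (nhds 0) := by
  obtain ⟨ψ, c, hψ⟩ := hconv.exists_continuousLinearMap_add_const_le hlsc
  have hminorant : ∀ h, (ψ.comp j) h + (ψ x + c) ≤ f (x + j h) := fun h => by
    simpa [add_comm, add_assoc] using hψ (x + j h)
  set v : ℝ → ℝ := fun α => 4 * α * (f x - (ψ x + c) + α * ‖ψ.comp j‖ ^ 2)
  have hv : Tendsto v (𝓝[>] 0) (𝓝 0) := by
    have hv_cont : Continuous v := by fun_prop
    simpa [v] using (hv_cont.tendsto 0).mono_left nhdsWithin_le_nhds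
  refine tendsto_norm_zero_of_norm_sq_le hv ?_
  filter_upwards [Ioo_mem_nhdsGT one_pos] with α hα
  simpa using norm_sq_le_of_add_norm_sq_div_le hminorant hα.1 (by simpa using hP α hα 0)

/-- The minimizers `P(x,α)` of `g_{α,x}` satisfy `‖P(x,α)‖_H → 0` as `α → 0⁺`. -/
theorem minimizer_norm_tendsto_zero {X H : Type*} [NormedAddCommGroup X]
    [NormedSpace ℝ X] [CompleteSpace X] [NormedAddCommGroup H]
    [InnerProductSpace ℝ H] [CompleteSpace H]
    (j : H →L[ℝ] X) (hj : Function.Injective j)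
    (f : X → ℝ) (hconv : ConvexOn ℝ Set.univ f) (hlsc : LowerSemicontinuous f)
    (x : X) (P : ℝ → H)
    (hP : ∀ α ∈ Set.Ioo (0 : ℝ) 1, ∀ h : H,
      f (x + j (P α)) + ‖P α‖ ^ 2 / (2 * α) ≤ f (x + j h) + ‖h‖ ^ 2 / (2 * α)) :
    Filter.Tendsto (fun α : ℝ => ‖P α‖) (nhdsWithin 0 (Set.Ioi 0)) (nhds 0) :=
  minimizer_norm_tendsto_zero_general j f hconv hlsc x P hP
end

section
/- (Maximum principle.) Let T > 0, let z₀ : ℝⁿ → ℝ be continuous and bounded, and let z : [0,T] × ℝⁿ → ℝ be a bounded continuous function which, on (0,T] × ℝⁿ, has a continuous time derivative D_t z and continuous spatial derivatives up to order two, and which satisfies D_t z(t,ξ) − L_φ z(t,ξ) ≤ 0 for all 0 < t ≤ T and ξ ∈ ℝⁿ, together with z(0,ξ) = z₀(ξ) for all ξ ∈ ℝⁿ. If sup z > 0, then for every t ∈ [0,T] and every ξ ∈ ℝⁿ one has z(t,ξ) ≤ sup_{η∈ℝⁿ} z₀(η). -/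
open Set

/-- The elliptic operator `L_φ u(ξ) = Δu(ξ) - ⟨∇φ(ξ) + ξ, ∇u(ξ)⟩`, written via partial
derivatives in the coordinate directions of `ℝⁿ`. -/
noncomputable def Lphi {n : ℕ} (φ u : EuclideanSpace ℝ (Fin n) → ℝ)
    (ξ : EuclideanSpace ℝ (Fin n)) : ℝ :=
  (∑ i : Fin n,
    fderiv ℝ (fun y => fderiv ℝ u y (EuclideanSpace.single i 1)) ξ
      (EuclideanSpace.single i 1)) -
  ∑ i : Fin n,
    (fderiv ℝ φ ξ (EuclideanSpace.single i 1) + ξ i) *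
      fderiv ℝ u ξ (EuclideanSpace.single i 1)


open Filter Topology

section Aux
variable {n : ℕ}
local notation "E" => EuclideanSpace ℝ (Fin n)

lemma aux_second_deriv_nonpos {g g' : ℝ → ℝ} {A : ℝ}
    (hg : ∀ s, HasDerivAt g (g' s) s) (h0 : g' 0 = 0)
    (hA : HasDerivAt g' A 0) (hmax : ∀ s, g s ≤ g 0) : A ≤ 0 := by
  by_contra h
  push_neg at h
  have hs := hasDerivAt_iff_tendsto_slope.mp hA
  have h2 : Tendsto (slope g' 0) (𝓝[>] (0:ℝ)) (𝓝 A) :=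
    hs.mono_left (nhdsWithin_mono _ fun x hx => ne_of_gt hx)
  have hev : ∀ᶠ s in 𝓝[>] (0:ℝ), 0 < slope g' 0 s :=
    h2.eventually (eventually_gt_nhds h)
  obtain ⟨u, hu, hsub⟩ := mem_nhdsGT_iff_exists_Ioo_subset.mp hev
  have hu0 : 0 < u := hu
  have hpos : ∀ x ∈ Ioo (0:ℝ) u, 0 < g' x := by
    intro x hx
    have := hsub hx
    simp only [mem_setOf_eq, slope_def_field] at this
    have hx0 : (0:ℝ) < x := hx.1
    rw [h0, sub_zero, sub_zero] at this
    rcases div_pos_iff.mp this with ⟨h1, _⟩ | ⟨_, h2⟩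
    · exact h1
    · linarith
  have hmono : StrictMonoOn g (Icc 0 u) := by
    apply strictMonoOn_of_deriv_pos (convex_Icc 0 u)
    · exact fun x _ => (hg x).continuousAt.continuousWithinAt
    · intro x hx
      rw [interior_Icc] at hx
      rw [(hg x).deriv]
      exact hpos x hx
  have : g 0 < g (u/2) := hmono ⟨le_refl 0, hu0.le⟩ ⟨by linarith, by linarith⟩ (by linarith)
  exact absurd (hmax (u/2)) (not_le.2 this)

lemma aux_left_deriv_nonneg {g : ℝ → ℝ} {d t : ℝ} (ht : 0 < t)
    (hg : HasDerivAt g d t) (hmax : ∀ s, 0 ≤ s → s ≤ t → g s ≤ g t) : 0 ≤ d := by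
  have hs := hasDerivAt_iff_tendsto_slope.mp hg
  have h2 : Tendsto (slope g t) (𝓝[<] t) (𝓝 d) :=
    hs.mono_left (nhdsWithin_mono _ fun x hx => ne_of_lt hx)
  refine ge_of_tendsto h2 ?_
  filter_upwards [Ioo_mem_nhdsLT_of_mem (Set.mem_Ioc.mpr ⟨ht, le_refl t⟩)] with s hs'
  have hle : g s ≤ g t := hmax s hs'.1.le hs'.2.le
  rw [slope_def_field]
  exact div_nonneg_iff.2 (Or.inr ⟨by linarith, by linarith [hs'.2]⟩)

lemma aux_line_hasDerivAt (x v : E) (s : ℝ) :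
    HasDerivAt (fun r : ℝ => x + r • v) v s := by
  simpa using ((hasDerivAt_id s).smul_const v).const_add x


lemma aux_dir_second_deriv {f : E → ℝ} (hf : ContDiff ℝ 2 f) (x v : E)
    (hmax : ∀ y, f y ≤ f x) :
    fderiv ℝ (fun y => fderiv ℝ f y v) x v ≤ 0 := by
  have hdf : ContDiff ℝ 1 (fderiv ℝ f) := hf.fderiv_right (le_refl 2)
  have hF : ContDiff ℝ 1 (fun y => fderiv ℝ f y v) :=
    (ContinuousLinearMap.apply ℝ ℝ v).contDiff.comp hdf
  have hfd : Differentiable ℝ f := hf.differentiable two_ne_zero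
  set g : ℝ → ℝ := fun s => f (x + s • v) with hgdef
  set g' : ℝ → ℝ := fun s => fderiv ℝ f (x + s • v) v with hg'def
  have hg : ∀ s, HasDerivAt g (g' s) s := by
    intro s
    have := (hfd (x + s • v)).hasFDerivAt.comp_hasDerivAt s (aux_line_hasDerivAt x v s)
    exact this
  have hA : HasDerivAt g' (fderiv ℝ (fun y => fderiv ℝ f y v) x v) 0 := by
    have h1 := ((hF.differentiable one_ne_zero) (x + (0:ℝ) • v)).hasFDerivAt.comp_hasDerivAt 0
      (aux_line_hasDerivAt x v 0)
    simp only [zero_smul, add_zero] at h1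
    exact h1
  have h0 : g' 0 = 0 := by
    have hloc : IsLocalMax f x := Filter.Eventually.of_forall hmax
    simp [hg'def, hloc.fderiv_eq_zero]
  exact aux_second_deriv_nonpos hg h0 hA (fun s => by simpa [hgdef] using hmax (x + s • v))


noncomputable def qf (ξ : E) : ℝ := 1 + ‖ξ‖^2

lemma qf_contDiff : ContDiff ℝ 2 (qf (n := n)) :=
  contDiff_const.add (contDiff_norm_sq ℝ)

lemma qf_hasFDerivAt (ξ : E) :
    HasFDerivAt (qf (n := n)) ((2:ℝ) • (innerSL ℝ ξ : E →L[ℝ] ℝ)) ξ := by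
  have h1 := (hasFDerivAt_const (1:ℝ) ξ).add ((hasFDerivAt_id ξ).inner ℝ (hasFDerivAt_id ξ))
  simp only [zero_add, id_eq] at h1
  have heq : (fun y : E => (1:ℝ) + (inner ℝ y y : ℝ)) = qf (n := n) := by
    funext y; rw [qf, real_inner_self_eq_norm_sq]
  change HasFDerivAt (fun y : E => (1:ℝ) + (inner ℝ y y : ℝ)) _ ξ at h1
  rw [heq] at h1
  refine h1.congr_fderiv ?_
  ext v
  simp only [ContinuousLinearMap.smul_apply, innerSL_apply_apply, ContinuousLinearMap.coe_comp',
    Function.comp_apply, ContinuousLinearMap.prod_apply, ContinuousLinearMap.coe_id', id_eq,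
    fderivInnerCLM_apply, smul_eq_mul]
  rw [real_inner_comm v ξ]; ring

lemma qf_fderiv_single (ξ : E) (i : Fin n) :
    fderiv ℝ (qf (n := n)) ξ (EuclideanSpace.single i 1) = 2 * ξ i := by
  rw [(qf_hasFDerivAt ξ).fderiv]
  simp [EuclideanSpace.inner_single_right, real_inner_comm]

lemma qf_fderiv_fun (i : Fin n) :
    (fun y : E => fderiv ℝ (qf (n := n)) y (EuclideanSpace.single i 1))
      = fun y : E => 2 * y i := by
  funext y; exact qf_fderiv_single y i

lemma qf_second_deriv (ξ : E) (i : Fin n) :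
    fderiv ℝ (fun y : E => fderiv ℝ (qf (n := n)) y (EuclideanSpace.single i 1)) ξ
      (EuclideanSpace.single i 1) = 2 := by
  rw [qf_fderiv_fun]
  have : (fun y : E => 2 * y i) = fun y : E => ((2:ℝ) • (EuclideanSpace.proj i : E →L[ℝ] ℝ)) y := by
    funext y; simp
  rw [this, ContinuousLinearMap.fderiv]
  simp [EuclideanSpace.single_apply]

lemma euclid_decomp (ξ : E) : ∑ i, ξ i • EuclideanSpace.single i (1:ℝ) = ξ := by
  ext j
  simp [EuclideanSpace.single_apply, Pi.single_apply]

lemma euclid_clm_sum (L : E →L[ℝ] ℝ) (ξ : E) :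
    ∑ i, L (EuclideanSpace.single i 1) * ξ i = L ξ := by
  conv_rhs => rw [← euclid_decomp ξ]
  rw [map_sum]
  simp [mul_comm]

lemma euclid_norm_sq (ξ : E) : ∑ i, ξ i * ξ i = ‖ξ‖^2 := by
  rw [← real_inner_self_eq_norm_sq]
  rw [PiLp.inner_apply]; simp [sq]

lemma Lphi_le_at_max (φ : E → ℝ) (hφ : ContDiff ℝ (⊤ : ℕ∞) φ) (K : NNReal)
    (hφlip : LipschitzWith K (gradient φ))
    (u : E → ℝ) (hu : ContDiff ℝ 2 u) (c : ℝ) (hc : 0 < c) (ξ : E)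
    (hmax : ∀ y, u y - c * qf y ≤ u ξ - c * qf ξ) :
    Lphi φ u ξ ≤ c * (2*n + ‖gradient φ 0‖^2 + 2*K + 1) * qf ξ := by
  set w : E → ℝ := fun y => u y - c * qf y with hwdef
  have hw : ContDiff ℝ 2 w := hu.sub (contDiff_const.mul qf_contDiff)
  have hwmax : ∀ y, w y ≤ w ξ := hmax
  have hud : Differentiable ℝ u := hu.differentiable two_ne_zero
  have hwd : Differentiable ℝ w := hw.differentiable two_ne_zero
  have hqd : ∀ y : E, DifferentiableAt ℝ (qf (n := n)) y :=
    fun y => (qf_hasFDerivAt y).differentiableAt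
  -- first derivative decomposition
  have key : ∀ y : E, fderiv ℝ u y = fderiv ℝ w y + c • fderiv ℝ (qf (n := n)) y := by
    intro y
    have h1 : u = fun y => w y + c * qf y := by funext y; simp [hwdef]
    rw [h1, fderiv_fun_add (hwd y) ((hqd y).const_mul c),
      fderiv_const_mul (hqd y) c]
  have hloc : IsLocalMax w ξ := Filter.Eventually.of_forall (fun y => hwmax y)
  have hfw0 : fderiv ℝ w ξ = 0 := hloc.fderiv_eq_zero
  have Du : ∀ i : Fin n, fderiv ℝ u ξ (EuclideanSpace.single i 1) = c * (2 * ξ i) := by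
    intro i
    rw [key ξ, hfw0]
    simp [qf_fderiv_single ξ i]
  -- second derivatives
  have D2 : ∀ i : Fin n,
      fderiv ℝ (fun y => fderiv ℝ u y (EuclideanSpace.single i 1)) ξ
        (EuclideanSpace.single i 1) ≤ 2 * c := by
    intro i
    have heq : (fun y => fderiv ℝ u y (EuclideanSpace.single i 1))
        = fun y => fderiv ℝ w y (EuclideanSpace.single i 1)
          + c * fderiv ℝ (qf (n := n)) y (EuclideanSpace.single i 1) := by
      funext y; rw [key y]; simp
    rw [heq]
    have hdw1 : ContDiff ℝ 1 (fun y => fderiv ℝ w y (EuclideanSpace.single i 1)) := by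
      exact (ContinuousLinearMap.apply ℝ ℝ (EuclideanSpace.single i 1)).contDiff.comp
        (hw.fderiv_right (m := 1) (by norm_num))
    have hdq1 : ContDiff ℝ 1 (fun y => fderiv ℝ (qf (n := n)) y (EuclideanSpace.single i 1)) := by
      exact (ContinuousLinearMap.apply ℝ ℝ (EuclideanSpace.single i 1)).contDiff.comp
        (qf_contDiff.fderiv_right (m := 1) (by norm_num))
    rw [fderiv_fun_add ((hdw1.differentiable one_ne_zero) ξ)
        (((hdq1.differentiable one_ne_zero) ξ).const_mul c),
      fderiv_const_mul ((hdq1.differentiable one_ne_zero) ξ) c]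
    simp only [ContinuousLinearMap.add_apply, ContinuousLinearMap.smul_apply, smul_eq_mul]
    have h2w := aux_dir_second_deriv hw ξ (EuclideanSpace.single i 1) hwmax
    have h2q := qf_second_deriv ξ i
    rw [h2q]
    linarith
  -- bound pieces
  set G : ℝ := ‖gradient φ 0‖ with hG
  have hφd : Differentiable ℝ φ := hφ.differentiable (by simp)
  have hinner : fderiv ℝ φ ξ ξ = @inner ℝ _ _ (gradient φ ξ) ξ := by
    have : fderiv ℝ φ ξ = InnerProductSpace.toDual ℝ _ (gradient φ ξ) :=
      ((InnerProductSpace.toDual ℝ _).apply_symm_apply (fderiv ℝ φ ξ)).symm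
    rw [this, InnerProductSpace.toDual_apply_apply]
  have hgradbound : ‖gradient φ ξ‖ ≤ G + K * ‖ξ‖ := by
    have h1 : ‖gradient φ ξ - gradient φ 0‖ ≤ K * ‖ξ - 0‖ := hφlip.norm_sub_le ξ 0
    have h2 := norm_sub_norm_le (gradient φ ξ) (gradient φ 0)
    simp only [sub_zero] at h1
    linarith
  have hinnerlb : -( (G + K * ‖ξ‖) * ‖ξ‖) ≤ fderiv ℝ φ ξ ξ := by
    rw [hinner]
    have h1 := abs_real_inner_le_norm (gradient φ ξ) ξ
    have h2 : -(‖gradient φ ξ‖ * ‖ξ‖) ≤ @inner ℝ _ _ (gradient φ ξ) ξ :=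
      neg_le_of_abs_le h1 |>.trans_eq rfl
    nlinarith [norm_nonneg ξ, norm_nonneg (gradient φ ξ)]
  -- assemble
  have hsum2 : (∑ i : Fin n,
      fderiv ℝ (fun y => fderiv ℝ u y (EuclideanSpace.single i 1)) ξ
        (EuclideanSpace.single i 1)) ≤ n * (2*c) := by
    calc _ ≤ ∑ _i : Fin n, 2*c := Finset.sum_le_sum (fun i _ => D2 i)
    _ = n * (2*c) := by simp [Finset.sum_const, nsmul_eq_mul]
  have hsumgrad : (∑ i : Fin n,
      (fderiv ℝ φ ξ (EuclideanSpace.single i 1) + ξ i) *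
        fderiv ℝ u ξ (EuclideanSpace.single i 1))
      = 2*c*(fderiv ℝ φ ξ ξ) + 2*c*(‖ξ‖^2) := by
    have h1 : ∀ i : Fin n, (fderiv ℝ φ ξ (EuclideanSpace.single i 1) + ξ i) *
        fderiv ℝ u ξ (EuclideanSpace.single i 1)
        = 2*c*(fderiv ℝ φ ξ (EuclideanSpace.single i 1) * ξ i) + 2*c*(ξ i * ξ i) := by
      intro i; rw [Du i]; ring
    rw [Finset.sum_congr rfl (fun i _ => h1 i), Finset.sum_add_distrib,
      ← Finset.mul_sum, ← Finset.mul_sum, euclid_clm_sum, euclid_norm_sq]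
  rw [Lphi, hsumgrad]
  have hqξ : qf ξ = 1 + ‖ξ‖^2 := rfl
  have hn0 : (0:ℝ) ≤ n := Nat.cast_nonneg n
  have hK0 : (0:ℝ) ≤ K := K.2
  have hr0 : (0:ℝ) ≤ ‖ξ‖ := norm_nonneg ξ
  have hG0 : (0:ℝ) ≤ G := norm_nonneg _
  rw [hqξ]
  have hIlb := mul_le_mul_of_nonneg_left hinnerlb (by positivity : (0:ℝ) ≤ 2*c)
  nlinarith [hsum2, hIlb, mul_nonneg hc.le (sq_nonneg (G - ‖ξ‖)),
    mul_nonneg (mul_nonneg hc.le hn0) (sq_nonneg ‖ξ‖),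
    mul_nonneg hc.le (mul_nonneg (sq_nonneg G) (sq_nonneg ‖ξ‖)),
    mul_nonneg hc.le hK0, mul_nonneg (mul_nonneg hc.le hK0) (sq_nonneg ‖ξ‖),
    hc.le, mul_nonneg hc.le (sq_nonneg ‖ξ‖)]

end Aux

/-- Maximum principle for the operator `L_φ`: a bounded continuous function `z` on
`[0,T] × ℝⁿ`, of class `C^{1,2}` on `(0,T] × ℝⁿ`, satisfying `D_t z - L_φ z ≤ 0` and
`z(0,·) = z₀`, with `sup z > 0`, is bounded above by `sup z₀`. -/
theorem maximum_principle {n : ℕ} (hn : 0 < n)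
    (φ : EuclideanSpace ℝ (Fin n) → ℝ) (hφ : ContDiff ℝ (⊤ : ℕ∞) φ)
    (hφconv : ConvexOn ℝ Set.univ φ) (K : NNReal) (hφlip : LipschitzWith K (gradient φ))
    (T : ℝ) (hT : 0 < T)
    (z₀ : EuclideanSpace ℝ (Fin n) → ℝ) (hz₀c : Continuous z₀)
    (hz₀b : ∃ C : ℝ, ∀ ξ, |z₀ ξ| ≤ C)
    (z : ℝ → EuclideanSpace ℝ (Fin n) → ℝ)
    (hzc : ContinuousOn (fun p : ℝ × EuclideanSpace ℝ (Fin n) => z p.1 p.2)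
      (Icc 0 T ×ˢ univ))
    (hzb : ∃ C : ℝ, ∀ t ∈ Icc (0 : ℝ) T, ∀ ξ, |z t ξ| ≤ C)
    (Dt : ℝ → EuclideanSpace ℝ (Fin n) → ℝ)
    (hDt : ∀ t ∈ Ioc (0 : ℝ) T, ∀ ξ, HasDerivAt (fun s => z s ξ) (Dt t ξ) t)
    (hDtc : ContinuousOn (fun p : ℝ × EuclideanSpace ℝ (Fin n) => Dt p.1 p.2)
      (Ioc 0 T ×ˢ univ))
    (hzsp : ∀ t ∈ Ioc (0 : ℝ) T, ContDiff ℝ 2 (z t))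
    (hzsp1 : ContinuousOn
      (fun p : ℝ × EuclideanSpace ℝ (Fin n) => fderiv ℝ (z p.1) p.2)
      (Ioc 0 T ×ˢ univ))
    (hzsp2 : ContinuousOn
      (fun p : ℝ × EuclideanSpace ℝ (Fin n) => fderiv ℝ (fderiv ℝ (z p.1)) p.2)
      (Ioc 0 T ×ˢ univ))
    (hpde : ∀ t ∈ Ioc (0 : ℝ) T, ∀ ξ, Dt t ξ - Lphi φ (z t) ξ ≤ 0)
    (hinit : ∀ ξ, z 0 ξ = z₀ ξ)
    (hpos : ∃ t ∈ Icc (0 : ℝ) T, ∃ ξ, 0 < z t ξ) :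
    ∀ t ∈ Icc (0 : ℝ) T, ∀ ξ, z t ξ ≤ ⨆ η, z₀ η := by
  classical
  obtain ⟨C₀, hC₀⟩ := hz₀b
  obtain ⟨C, hC⟩ := hzb
  have hbdd : BddAbove (Set.range z₀) := ⟨C₀, by rintro _ ⟨η, rfl⟩; exact (abs_le.mp (hC₀ η)).2⟩
  have hz₀M : ∀ η, z₀ η ≤ ⨆ η, z₀ η := fun η => le_ciSup hbdd η
  set G : ℝ := ‖gradient φ 0‖ with hGdef
  set β : ℝ := 2*n + G^2 + 2*(K:ℝ) + 1 with hβdef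
  have hK0 : (0:ℝ) ≤ K := K.2
  have hG0 : 0 ≤ G := norm_nonneg _
  have hβ0 : 0 < β := by positivity
  have hqf1 : ∀ ξ : EuclideanSpace ℝ (Fin n), 1 ≤ qf ξ := fun ξ => by
    have h := sq_nonneg ‖ξ‖
    simp only [qf]; linarith
  have key : ∀ ε : ℝ, 0 < ε → ∀ α : ℝ, 0 < α → ∀ t ∈ Icc (0:ℝ) T, ∀ ξ,
      z t ξ ≤ (⨆ η, z₀ η) + ε*t + α * Real.exp (β*t) * qf ξ := by
    intro ε hε α hα
    set V : ℝ × EuclideanSpace ℝ (Fin n) → ℝ :=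
      fun p => z p.1 p.2 - ε*p.1 - α*Real.exp (β*p.1)*qf p.2 with hVdef
    have hC0 : 0 ≤ C := (abs_nonneg _).trans (hC 0 ⟨le_rfl, hT.le⟩ 0)
    set R : ℝ := Real.sqrt ((2*C+1)/α) with hRdef
    have hR0 : 0 ≤ R := Real.sqrt_nonneg _
    have hR2 : α * R^2 = 2*C+1 := by
      rw [hRdef, Real.sq_sqrt (by positivity)]
      field_simp
    set S : Set (ℝ × EuclideanSpace ℝ (Fin n)) := Icc (0:ℝ) T ×ˢ Metric.closedBall 0 R
      with hSdef
    have hScpt : IsCompact S := isCompact_Icc.prod (isCompact_closedBall _ _)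
    have hSsub : S ⊆ Icc 0 T ×ˢ univ := fun p hp => ⟨hp.1, mem_univ _⟩
    have hVcont : ContinuousOn V S := by
      apply ContinuousOn.sub
      apply ContinuousOn.sub
      · exact hzc.mono hSsub
      · exact (continuous_const.mul continuous_fst).continuousOn
      · exact ((continuous_const.mul
          (Real.continuous_exp.comp (continuous_const.mul continuous_fst))).mul
          (qf_contDiff.continuous.comp continuous_snd)).continuousOn
    have h00 : ((0:ℝ), (0:EuclideanSpace ℝ (Fin n))) ∈ S :=
      ⟨⟨le_rfl, hT.le⟩, Metric.mem_closedBall_self hR0⟩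
    obtain ⟨p, hpS, hpmax⟩ := hScpt.exists_isMaxOn ⟨_, h00⟩ hVcont
    obtain ⟨ts, ξs⟩ := p
    have hts : ts ∈ Icc (0:ℝ) T := hpS.1
    have hVout : ∀ t ∈ Icc (0:ℝ) T, ∀ ξ : EuclideanSpace ℝ (Fin n),
        R < ‖ξ‖ → V (t, ξ) < V (0, 0) := by
      intro t ht ξ hξ
      have h1 : z t ξ ≤ C := (abs_le.mp (hC t ht ξ)).2
      have h1' : -C ≤ z 0 0 := (abs_le.mp (hC 0 ⟨le_rfl, hT.le⟩ 0)).1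
      have h2 : 1 ≤ Real.exp (β*t) := Real.one_le_exp (mul_nonneg hβ0.le ht.1)
      have h3 : 0 ≤ ε * t := mul_nonneg hε.le ht.1
      have h4 : R^2 < ‖ξ‖^2 := by nlinarith
      have h5 : α * R^2 < α * ‖ξ‖^2 := by nlinarith
      have h6 : α * (1 + ‖ξ‖^2) * 1 ≤ α * (1 + ‖ξ‖^2) * Real.exp (β*t) := by
        apply mul_le_mul_of_nonneg_left h2 (by positivity)
      simp only [hVdef, qf, mul_zero, Real.exp_zero, mul_one, norm_zero,
        ne_eq, OfNat.ofNat_ne_zero, not_false_eq_true, zero_pow, add_zero, sub_zero]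
      nlinarith
    have hglobal : ∀ t ∈ Icc (0:ℝ) T, ∀ ξ, V (t, ξ) ≤ V (ts, ξs) := by
      intro t ht ξ
      by_cases hξR : ‖ξ‖ ≤ R
      · exact hpmax (⟨ht, mem_closedBall_zero_iff.mpr hξR⟩ : (t, ξ) ∈ S)
      · exact le_trans (hVout t ht ξ (not_le.mp hξR)).le (hpmax h00)
    rcases eq_or_lt_of_le hts.1 with h0t | h0t
    · -- maximum at t = 0
      have hVs : V ((0:ℝ), ξs) ≤ ⨆ η, z₀ η := by
        have h1 := hz₀M ξs
        have h2 := mul_le_mul_of_nonneg_left (hqf1 ξs) hα.le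
        simp only [hVdef, mul_zero, zero_mul, Real.exp_zero, mul_one, sub_zero, hinit ξs]
        linarith
      intro t ht ξ
      have h3 := (hglobal t ht ξ).trans (h0t ▸ hVs)
      simp only [hVdef] at h3
      linarith
    · -- maximum at positive time : contradiction
      exfalso
      have htsIoc : ts ∈ Ioc (0:ℝ) T := ⟨h0t, hts.2⟩
      set c : ℝ := α * Real.exp (β * ts) with hcdef
      have hc : 0 < c := by positivity
      have hu : ContDiff ℝ 2 (z ts) := hzsp ts htsIoc
      have hsmax : ∀ y, z ts y - c * qf y ≤ z ts ξs - c * qf ξs := by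
        intro y
        have h := hglobal ts hts y
        simp only [hVdef] at h
        rw [hcdef]
        linarith
      have hLphi := Lphi_le_at_max φ hφ K hφlip (z ts) hu c hc ξs hsmax
      have hexp : HasDerivAt (fun s => Real.exp (β*s)) (Real.exp (β*ts) * β) ts := by
        have h1 : HasDerivAt (fun s : ℝ => β*s) β ts := by
          simpa using (hasDerivAt_id ts).const_mul β
        exact (Real.hasDerivAt_exp (β*ts)).comp ts h1
      have hgd : HasDerivAt (fun s => V (s, ξs))
          (Dt ts ξs - ε - α*(Real.exp (β*ts)*β)*qf ξs) ts := by
        have h1 := hDt ts htsIoc ξs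
        have h2 : HasDerivAt (fun s : ℝ => ε*s) ε ts := by
          simpa using (hasDerivAt_id ts).const_mul ε
        have h3 : HasDerivAt (fun s => α*Real.exp (β*s)*qf ξs)
            (α*(Real.exp (β*ts)*β)*qf ξs) ts :=
          (hexp.const_mul α).mul_const (qf ξs)
        exact (h1.sub h2).sub h3
      have hDtlb : 0 ≤ Dt ts ξs - ε - α*(Real.exp (β*ts)*β)*qf ξs := by
        apply aux_left_deriv_nonneg h0t hgd
        intro s hs0 hst
        exact hglobal s ⟨hs0, hst.trans hts.2⟩ ξs
      have hpde' := hpde ts htsIoc ξs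
      have hqfpos : (0:ℝ) < qf ξs := lt_of_lt_of_le one_pos (hqf1 ξs)
      have hrw : c * (2*(n:ℝ) + G^2 + 2*(K:ℝ) + 1) * qf ξs
          = α*(Real.exp (β*ts)*β)*qf ξs := by
        rw [hcdef, hβdef]; ring
      rw [hrw] at hLphi
      linarith
  intro t ht ξ
  have hqfpos : (0:ℝ) < qf ξ := lt_of_lt_of_le one_pos (hqf1 ξ)
  have hA : (0:ℝ) < Real.exp (β*t) * qf ξ := mul_pos (Real.exp_pos _) hqfpos
  apply le_of_forall_pos_le_add
  intro δ hδ
  have h1 := key (δ/(2*(T+1))) (by positivity) (δ/(2*(Real.exp (β*t)*qf ξ)))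
    (div_pos hδ (by linarith)) t ht ξ
  have e1 : δ/(2*(T+1)) * t ≤ δ/2 := by
    have h2 : δ/(2*(T+1)) * t ≤ δ/(2*(T+1)) * (T+1) :=
      mul_le_mul_of_nonneg_left (by linarith [ht.2]) (by positivity)
    have h3 : δ/(2*(T+1)) * (T+1) = δ/2 := by field_simp
    linarith
  have e2 : δ/(2*(Real.exp (β*t)*qf ξ)) * Real.exp (β*t) * qf ξ = δ/2 := by
    field_simp
  linarith
end

section
/- Let f ∈ C([0,1],ℝ) have a unique maximum point, i.e. there exists ξ_f ∈ [0,1] such that f(ξ_f) = F(f) and f(ξ) < f(ξ_f) for every ξ ∈ [0,1] with ξ ≠ ξ_f. Then F is Gâteaux differentiable at f, and its Gâteaux derivative is g ↦ g(ξ_f): for every g ∈ C([0,1],ℝ), the difference quotient (F(f + t g) − F(f))/t converges to g(ξ_f) as t → 0 (t ≠ 0). -/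
/-!
Let `x_t` maximize `f + t g`. Comparing its values at `x_t` and at the maximum point `x₀` of `f`
squeezes `max (f + t g) - max f` between `t g(x₀)` and `t g(x_t)`, so the difference quotient
lies between `g(x₀)` and `g(x_t)`. The same comparison gives `f(x_t) → f(x₀)`, and on a compact
space a strict maximum point attracts every such maximizing family: `x_t → x₀`, hence
`g(x_t) → g(x₀)`.
-/

open Filter Topology

theorem ciSup_eq_of_forall_le {ι α : Type*} [ConditionallyCompleteLattice α] {f : ι → α} {i : ι}
    (h : ∀ j, f j ≤ f i) : ⨆ j, f j = f i :=
  have : Nonempty ι := ⟨i⟩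
  ciSup_eq_of_forall_le_of_forall_lt_exists_gt h fun _ hw => ⟨i, hw⟩

section PerturbedMax

variable {X : Type*} {f g : X → ℝ} {t : ℝ} {x₀ x₁ : X}

theorem abs_sub_le_abs_mul_of_perturbed_max (h₀ : f x₁ ≤ f x₀)
    (h₁ : f x₀ + t * g x₀ ≤ f x₁ + t * g x₁) : |f x₁ - f x₀| ≤ |t| * |g x₁ - g x₀| := by
  rw [abs_of_nonpos (sub_nonpos.2 h₀), ← abs_mul]
  linarith [le_abs_self (t * (g x₁ - g x₀))]

theorem abs_div_sub_le_of_perturbed_max (ht : t ≠ 0) (h₀ : f x₁ ≤ f x₀)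
    (h₁ : f x₀ + t * g x₀ ≤ f x₁ + t * g x₁) :
    |(f x₁ + t * g x₁ - f x₀) / t - g x₀| ≤ |g x₁ - g x₀| := by
  have hquot : (f x₁ + t * g x₁ - f x₀) / t - g x₀
      = (f x₁ + t * g x₁ - (f x₀ + t * g x₀)) / t := by
    field_simp
    ring
  rw [hquot, abs_div, div_le_iff₀ (abs_pos.2 ht), abs_of_nonneg (sub_nonneg.2 h₁), ← abs_mul]
  linarith [le_abs_self ((g x₁ - g x₀) * t)]

end PerturbedMax

variable {X : Type*} [TopologicalSpace X]

theorem tendsto_of_tendsto_comp_of_forall_lt [CompactSpace X] {α : Type*}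
    {f : X → ℝ} (hf : Continuous f) {x₀ : X} (hmax : ∀ x ≠ x₀, f x < f x₀)
    {l : Filter α} {u : α → X} (hu : Tendsto (f ∘ u) l (𝓝 (f x₀))) : Tendsto u l (𝓝 x₀) := by
  refine tendsto_nhds_of_unique_mapClusterPt fun z hz => by_contra fun hne => (hmax z hne).ne ?_
  have : ClusterPt (f z) (𝓝 (f x₀)) := (hz.tendsto_comp (hf.tendsto z)).clusterPt.mono hu
  exact eq_of_nhds_neBot this

theorem ContinuousMap.tendsto_iSup_add_smul_sub_iSup_div [CompactSpace X] (f g : C(X, ℝ))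
    {x₀ : X} (hmax : ∀ x ≠ x₀, f x < f x₀) :
    Tendsto (fun t : ℝ => ((⨆ x, (f + t • g) x) - ⨆ x, f x) / t) (𝓝[≠] 0) (𝓝 (g x₀)) := by
  have hle : ∀ x, f x ≤ f x₀ := fun x =>
    (eq_or_ne x x₀).elim (fun h => h ▸ le_rfl) fun h => (hmax x h).le
  have : Nonempty X := ⟨x₀⟩
  choose x hx using fun t : ℝ =>
    (f + t • g).continuous.exists_forall_ge (by simp [cocompact_eq_bot])
  have hperturbed : ∀ t y, f y + t * g y ≤ f (x t) + t * g (x t) := fun t y => by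
    simpa using hx t y
  have hsup : ∀ t : ℝ, ⨆ y, (f + t • g) y = f (x t) + t * g (x t) := fun t => by
    simpa using ciSup_eq_of_forall_le (hx t)
  have hxt : Tendsto x (𝓝[≠] 0) (𝓝 x₀) := by
    refine tendsto_of_tendsto_comp_of_forall_lt f.continuous hmax ?_
    rw [tendsto_iff_norm_sub_tendsto_zero]
    have hbound : Tendsto (fun t : ℝ => |t| * (2 * ‖g‖)) (𝓝[≠] 0) (𝓝 0) := by
      simpa using ((continuous_abs.tendsto (0 : ℝ)).mul_const (2 * ‖g‖)).mono_left
        nhdsWithin_le_nhds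
    refine squeeze_zero (fun _ => norm_nonneg _) (fun t => ?_) hbound
    exact (abs_sub_le_abs_mul_of_perturbed_max (hle _) (hperturbed t x₀)).trans
      (mul_le_mul_of_nonneg_left (g.dist_le_two_norm _ x₀) (abs_nonneg t))
  have hgx : Tendsto (g ∘ x) (𝓝[≠] 0) (𝓝 (g x₀)) := (g.continuous.tendsto x₀).comp hxt
  rw [tendsto_iff_norm_sub_tendsto_zero] at hgx ⊢
  refine squeeze_zero' (.of_forall fun _ => norm_nonneg _) ?_ hgx
  filter_upwards [self_mem_nhdsWithin] with t (ht : t ≠ 0)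
  rw [hsup, ciSup_eq_of_forall_le hle]
  exact abs_div_sub_le_of_perturbed_max ht (hle _) (hperturbed t x₀)

theorem max_functional_gateaux_differentiable_general
    (f : C(Set.Icc (0 : ℝ) 1, ℝ)) (ξf : Set.Icc (0 : ℝ) 1)
    (huniq : ∀ ξ : Set.Icc (0 : ℝ) 1, ξ ≠ ξf → f ξ < f ξf) :
    ∀ g : C(Set.Icc (0 : ℝ) 1, ℝ),
      Filter.Tendsto
        (fun t : ℝ => ((⨆ ξ, (f + t • g) ξ) - ⨆ ξ, f ξ) / t)
        (nhdsWithin 0 {(0 : ℝ)}ᶜ) (nhds (g ξf)) :=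
  fun g => f.tendsto_iSup_add_smul_sub_iSup_div g huniq

/-- If `f ∈ C([0,1],ℝ)` has a unique maximum point `ξf`, then the maximum functional
`F(f) = max f` is Gâteaux differentiable at `f` with derivative `g ↦ g(ξf)`: for every
`g`, the difference quotient `(F(f + t g) - F(f))/t` converges to `g(ξf)` as `t → 0`. -/
theorem max_functional_gateaux_differentiable
    (f : C(Set.Icc (0 : ℝ) 1, ℝ)) (ξf : Set.Icc (0 : ℝ) 1)
    (hmax : f ξf = ⨆ ξ, f ξ)
    (huniq : ∀ ξ : Set.Icc (0 : ℝ) 1, ξ ≠ ξf → f ξ < f ξf) :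
    ∀ g : C(Set.Icc (0 : ℝ) 1, ℝ),
      Filter.Tendsto
        (fun t : ℝ => ((⨆ ξ, (f + t • g) ξ) - ⨆ ξ, f ξ) / t)
        (nhdsWithin 0 {(0 : ℝ)}ᶜ) (nhds (g ξf)) :=
  max_functional_gateaux_differentiable_general f ξf huniq
end
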